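/- Let G be a countable IB-homogeneous graph with finite star number that represents m (some bimorphism maps a nonedge to an edge). Then every finite subset of G has a co-cone: a vertex outside the set adjacent to none of its elements. -/

import Mathlib

/-- A bimorphism of a graph: a bijective edge-preserving self-map. -/
def IsBimorphism {V : Type*} (G : SimpleGraph V) (F : V → V) : Prop :=
  Function.Bijective F ∧ ∀ u v, G.Adj u v → G.Adj (F u) (F v)

/-- A partial isomorphism of `G` with finite domain `S`. -/
def IsPartialIso {V : Type*} (G : SimpleGraph V) (S : Finset V) (f : V → V) : Prop :=
  Set.InjOn f S ∧ ∀ u ∈ S, ∀ v ∈ S, (G.Adj u v ↔ G.Adj (f u) (f v))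

/-- `G` is IB-homogeneous: every isomorphism between finite induced subgraphs
extends to a bimorphism of `G`. -/
def IBHom {V : Type*} (G : SimpleGraph V) : Prop :=
  ∀ (S : Finset V) (f : V → V), IsPartialIso G S f →
    ∃ F : V → V, IsBimorphism G F ∧ ∀ x ∈ S, F x = f x

/-- `G` represents the monomorphism `m`: some bimorphism maps a nonedge to an edge. -/
def RepM {V : Type*} (G : SimpleGraph V) : Prop :=
  ∃ F : V → V, IsBimorphism G F ∧
    ∃ u v : V, u ≠ v ∧ ¬ G.Adj u v ∧ G.Adj (F u) (F v)

/-- An independent set: pairwise nonadjacent vertices. -/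
def IsIndep {V : Type*} (G : SimpleGraph V) (s : Set V) : Prop :=
  s.Pairwise fun u v => ¬ G.Adj u v

/-!
Representing `m` lets one pull any edge back to a nonedge along a bimorphism (first move the
edge `F u F v` onto the given edge by IB-homogeneity). Pulling a finite set back along such a
bimorphism keeps its size and strictly lowers its number of edges, so the graph contains
independent sets of every finite size. If a finite set `X` had no co-cone, it would dominate an
independent set `I`; by the star bound each vertex of `X` has at most `k` neighbours in `I`,
so `|I| ≤ |X| + k |X|`, which fails for `|I|` large.
-/

open Finset

section CoCone

variable {V : Type*} {G : SimpleGraph V}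

lemma IsBimorphism.comp {F H : V → V} (hH : IsBimorphism G H) (hF : IsBimorphism G F) :
    IsBimorphism G (H ∘ F) :=
  ⟨hH.1.comp hF.1, fun _ _ h => hH.2 _ _ (hF.2 _ _ h)⟩

/-- A bimorphism of a finite graph permutes its finitely many edges, hence reflects them. -/
lemma IsBimorphism.adj_of_adj_apply [Finite V] {F : V → V} (hF : IsBimorphism G F) {u v : V}
    (h : G.Adj (F u) (F v)) : G.Adj u v := by
  let E : Set (V × V) := {p | G.Adj p.1 p.2}
  have hinj : Function.Injective (Prod.map F F) := hF.1.1.prodMap hF.1.1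
  have hmaps : Set.MapsTo (Prod.map F F) E E := fun p hp => hF.2 _ _ hp
  have hbij : Set.BijOn (Prod.map F F) E E :=
    (E.toFinite.injOn_iff_bijOn_of_mapsTo hmaps).1 hinj.injOn
  obtain ⟨p, hp, hpuv⟩ := hbij.surjOn (show (F u, F v) ∈ E from h)
  obtain rfl : p = (u, v) := hinj hpuv
  exact hp

lemma RepM.infinite (hm : RepM G) : Infinite V := by
  by_contra hfin
  rw [not_infinite_iff_finite] at hfin
  obtain ⟨F, hF, u, v, -, huv, hadj⟩ := hm
  exact huv (hF.adj_of_adj_apply hadj)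

lemma isPartialIso_pair_of_adj [DecidableEq V] {a b x y : V} (hab : G.Adj a b)
    (hxy : G.Adj x y) : IsPartialIso G {a, b} (fun w => if w = a then x else y) := by
  have hba : b ≠ a := hab.ne'
  refine ⟨?_, ?_⟩
  · intro p hp q hq hpq
    simp only [coe_insert, coe_singleton, Set.mem_insert_iff, Set.mem_singleton_iff] at hp hq
    rcases hp with rfl | rfl <;> rcases hq with rfl | rfl <;> simp_all [hxy.ne, hxy.ne']
  · intro p hp q hq
    simp only [mem_insert, mem_singleton] at hp hq
    rcases hp with rfl | rfl <;> rcases hq with rfl | rfl <;>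
      simp [hba, hab, hab.symm, hxy, hxy.symm]

lemma IBHom.exists_bimorphism_nonadj_to_adj (hG : IBHom G) (hm : RepM G) {x y : V}
    (hxy : G.Adj x y) :
    ∃ M : V → V, IsBimorphism G M ∧ ∃ u v : V, ¬ G.Adj u v ∧ M u = x ∧ M v = y := by
  classical
  obtain ⟨F, hF, u, v, -, huv, hadj⟩ := hm
  obtain ⟨H, hH, hHext⟩ := hG _ _ (isPartialIso_pair_of_adj hadj hxy)
  refine ⟨H ∘ F, hH.comp hF, u, v, huv, ?_, ?_⟩
  · simp [hHext (F u) (by simp)]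
  · simp [hHext (F v) (by simp), hadj.ne']

section AdjPairs

variable [DecidableRel G.Adj]

variable (G) in
def adjPairs (S : Finset V) : Finset (V × V) :=
  (S ×ˢ S).filter fun p => G.Adj p.1 p.2

lemma mem_adjPairs {S : Finset V} {p : V × V} :
    p ∈ adjPairs G S ↔ (p.1 ∈ S ∧ p.2 ∈ S) ∧ G.Adj p.1 p.2 := by
  simp [adjPairs]

lemma isIndep_of_adjPairs_eq_empty {S : Finset V} (h : adjPairs G S = ∅) : IsIndep G ↑S :=
  fun a ha b hb _ hab => by
    simpa [h] using (mem_adjPairs (p := (a, b))).2 ⟨⟨ha, hb⟩, hab⟩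

lemma card_adjPairs_lt_of_isBimorphism [DecidableEq V] {M : V → V} (hM : IsBimorphism G M)
    {S S' : Finset V} (hS' : ∀ w, w ∈ S' ↔ M w ∈ S) {u v : V} (huv : ¬ G.Adj u v)
    (hu : M u ∈ S) (hv : M v ∈ S) (hadj : G.Adj (M u) (M v)) :
    #(adjPairs G S') < #(adjPairs G S) := by
  have hinj : Function.Injective (Prod.map M M) := hM.1.1.prodMap hM.1.1
  calc #(adjPairs G S') ≤ #((adjPairs G S).erase (M u, M v)) := by
        refine card_le_card_of_injOn (Prod.map M M) ?_ hinj.injOn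
        rintro ⟨p, q⟩ hpq
        simp only [mem_coe, mem_erase, mem_adjPairs, hS'] at hpq ⊢
        refine ⟨fun h => ?_, hpq.1, hM.2 _ _ hpq.2⟩
        obtain ⟨rfl, rfl⟩ := Prod.ext_iff.1 (hinj (a₂ := (u, v)) h)
        exact huv hpq.2
    _ < #(adjPairs G S) :=
        card_erase_lt_of_mem (mem_adjPairs (p := (M u, M v)) |>.2 ⟨⟨hu, hv⟩, hadj⟩)

end AdjPairs

lemma IBHom.exists_isIndep_card_eq_card (hG : IBHom G) (hm : RepM G) (S : Finset V) :
    ∃ T : Finset V, #T = #S ∧ IsIndep G ↑T := by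
  classical
  induction hS : #(adjPairs G S) using Nat.strong_induction_on generalizing S with
  | _ n ih =>
  obtain hempty | ⟨⟨x, y⟩, hxy⟩ := (adjPairs G S).eq_empty_or_nonempty
  · exact ⟨S, rfl, isIndep_of_adjPairs_eq_empty hempty⟩
  obtain ⟨⟨hx, hy⟩, hxy⟩ := mem_adjPairs.1 hxy
  obtain ⟨M, hM, u, v, huv, rfl, rfl⟩ := hG.exists_bimorphism_nonadj_to_adj hm hxy
  let e := Equiv.ofBijective M hM.1
  have hS' : ∀ w, w ∈ S.map e.symm.toEmbedding ↔ M w ∈ S := fun w => by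
    simp [mem_map_equiv, e]
  obtain ⟨T, hT, hTindep⟩ := ih _ (hS ▸ card_adjPairs_lt_of_isBimorphism hM hS' huv hx hy hxy)
    (S.map e.symm.toEmbedding) rfl
  exact ⟨T, hT.trans (card_map _), hTindep⟩

lemma IBHom.exists_isIndep_card_eq (hG : IBHom G) (hm : RepM G) (n : ℕ) :
    ∃ T : Finset V, #T = n ∧ IsIndep G ↑T := by
  have := hm.infinite
  obtain ⟨S, rfl⟩ := Infinite.exists_subset_card_eq V n
  exact hG.exists_isIndep_card_eq_card hm S

lemma card_le_of_isIndep_of_dominated [DecidableEq V] [DecidableRel G.Adj] {k : ℕ}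
    (hk : ∀ (c : V) (s : Finset V), IsIndep G ↑s → (∀ v ∈ s, G.Adj c v) → #s ≤ k)
    {I X : Finset V} (hI : IsIndep G ↑I)
    (hdom : ∀ v ∈ I, v ∉ X → ∃ x ∈ X, G.Adj v x) :
    #I ≤ #X + #X * k := by
  let N : V → Finset V := fun x => I.filter (G.Adj x)
  have hcover : I ⊆ X ∪ X.biUnion N := by
    intro v hv
    by_cases hvX : v ∈ X
    · exact mem_union_left _ hvX
    · obtain ⟨x, hx, hvx⟩ := hdom v hv hvX
      exact mem_union_right _ (mem_biUnion.2 ⟨x, hx, mem_filter.2 ⟨hv, hvx.symm⟩⟩)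
  have hN : ∀ x ∈ X, #(N x) ≤ k := fun x _ =>
    hk x _ (hI.mono (coe_subset.2 (filter_subset _ _))) fun _ hv => (mem_filter.1 hv).2
  calc #I ≤ #(X ∪ X.biUnion N) := card_le_card hcover
    _ ≤ #X + #(X.biUnion N) := card_union_le _ _
    _ ≤ #X + ∑ x ∈ X, #(N x) := by grw [card_biUnion_le]
    _ ≤ #X + ∑ _x ∈ X, k := by grw [sum_le_sum hN]
    _ = #X + #X * k := by rw [sum_const, smul_eq_mul]

end CoCone

theorem stmt12_general {V : Type*} (G : SimpleGraph V) (hG : IBHom G) (hm : RepM G)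
    (hstar : ∃ k : ℕ, ∀ (c : V) (s : Finset V),
      IsIndep G ↑s → (∀ v ∈ s, G.Adj c v) → s.card ≤ k) :
    ∀ X : Finset V, ∃ v : V, v ∉ X ∧ ∀ x ∈ X, ¬ G.Adj v x := by
  classical
  obtain ⟨k, hk⟩ := hstar
  intro X
  obtain ⟨I, hIcard, hI⟩ := hG.exists_isIndep_card_eq hm (#X + #X * k + 1)
  by_contra! hnone
  have := card_le_of_isIndep_of_dominated hk hI fun v _ => hnone v
  omega

/-- A countable IB-homogeneous graph with finite star number representing `m` has the
co-cone property: every finite subset has a co-cone. -/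
theorem stmt12 {V : Type*} [Countable V] (G : SimpleGraph V) (hG : IBHom G) (hm : RepM G)
    (hstar : ∃ k : ℕ, ∀ (c : V) (s : Finset V),
      IsIndep G ↑s → (∀ v ∈ s, G.Adj c v) → s.card ≤ k) :
    ∀ X : Finset V, ∃ v : V, v ∉ X ∧ ∀ x ∈ X, ¬ G.Adj v x :=
  stmt12_general G hG hm hstar
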